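/- Let F be a field with algebraic closure F̄ and let P ∈ F[λ]^{m×n} have normal rank r > 0, degree exactly d, no finite eigenvalues (rank P(λ₀) = r for all λ₀ ∈ F̄), and no eigenvalue at infinity with respect to grade d (the matrix of coefficients of λ^d of the entries of P has rank r). Then: (i) if P = L E R with L ∈ F[λ]^{m×r} whose columns form a minimal basis of Col(P), R ∈ F[λ]^{r×n} whose rows form a minimal basis of Row(P), and E ∈ F[λ]^{r×r}, then the rows of E R form a minimal basis of Row(P), the columns of L E form a minimal basis of Col(P), and deg(L_{*i}) + deg((ER)_{i*}) = deg((LE)_{*i}) + deg(R_{i*}) = d for i = 1,…,r; (ii) if P = L R with L ∈ F[λ]^{m×r} whose columns form a minimal basis of Col(P) and R ∈ F[λ]^{r×n}, then the rows of R form a minimal basis of Row(P) and deg(L_{*i}) + deg(R_{i*}) = d for i = 1,…,r; (iii) if P = L R with R ∈ F[λ]^{r×n} whose rows form a minimal basis of Row(P) and L ∈ F[λ]^{m×r}, then the columns of L form a minimal basis of Col(P) and deg(L_{*i}) + deg(R_{i*}) = d for i = 1,…,r. -/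

import Mathlib

/-!
Write `P = L R` with `L` column reduced, and let `dᵢ`, `eᵢ` be the column degrees of `L` and the
row degrees of `R`. For `N ≥ maxᵢ (dᵢ + eᵢ)` the coefficient of `λ^N` in `P` is
`L_hc · diag[dᵢ + eᵢ = N] · R_hr`. At `N = maxᵢ (dᵢ + eᵢ)` this is nonzero, because `L_hc` has full
column rank and the rows of `R_hr` are nonzero, so the maximum is at most `d`. At `N = d` the
coefficient has rank `r`, which forces `dᵢ + eᵢ = d` for every `i` and `rank R_hr = r`. The rank
condition on `R(λ₀)` is inherited from `P(λ₀) = L(λ₀) R(λ₀)`, and `Row R = Row P` by dimension.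
The column version is the transpose of the row version, and the three-factor case applies
both to `L (E R)` and `(L E) R`.
-/

open Polynomial Matrix

noncomputable section

variable {F : Type*} [Field F]

/-- The matrix over the field of rational functions associated with a polynomial matrix. -/
def toRat {m n : ℕ} (P : Matrix (Fin m) (Fin n) F[X]) : Matrix (Fin m) (Fin n) (RatFunc F) :=
  P.map (algebraMap F[X] (RatFunc F))

/-- The normal rank of a polynomial matrix: its rank over the field of rational functions. -/
def normalRank {m n : ℕ} (P : Matrix (Fin m) (Fin n) F[X]) : ℕ := (toRat P).rank

/-- The degree of a polynomial matrix: the maximum of the degrees of its entries,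
`⊥` (i.e. -∞) for the zero matrix. -/
def matDeg {m n : ℕ} (P : Matrix (Fin m) (Fin n) F[X]) : WithBot ℕ :=
  Finset.univ.sup fun i : Fin m => Finset.univ.sup fun j : Fin n => (P i j).degree

/-- Degree of the i-th row. -/
def rowDeg {m n : ℕ} (P : Matrix (Fin m) (Fin n) F[X]) (i : Fin m) : WithBot ℕ :=
  Finset.univ.sup fun j : Fin n => (P i j).degree

/-- Degree of the j-th column. -/
def colDeg {m n : ℕ} (P : Matrix (Fin m) (Fin n) F[X]) (j : Fin n) : WithBot ℕ :=
  Finset.univ.sup fun i : Fin m => (P i j).degree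

/-- Degree of the i-th row as a natural number (0 for a zero row). -/
def rowDegNat {m n : ℕ} (P : Matrix (Fin m) (Fin n) F[X]) (i : Fin m) : ℕ :=
  Finset.univ.sup fun j : Fin n => (P i j).natDegree

/-- Degree of the j-th column as a natural number (0 for a zero column). -/
def colDegNat {m n : ℕ} (P : Matrix (Fin m) (Fin n) F[X]) (j : Fin n) : ℕ :=
  Finset.univ.sup fun i : Fin m => (P i j).natDegree

/-- Highest-row-degree coefficient matrix. -/
def hrMatrix {m n : ℕ} (P : Matrix (Fin m) (Fin n) F[X]) : Matrix (Fin m) (Fin n) F :=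
  Matrix.of fun i j => (P i j).coeff (rowDegNat P i)

/-- Highest-column-degree coefficient matrix. -/
def hcMatrix {m n : ℕ} (P : Matrix (Fin m) (Fin n) F[X]) : Matrix (Fin m) (Fin n) F :=
  Matrix.of fun i j => (P i j).coeff (colDegNat P j)

/-- A polynomial matrix is row reduced if its highest-row-degree coefficient matrix has
full row rank. -/
def RowReduced {m n : ℕ} (P : Matrix (Fin m) (Fin n) F[X]) : Prop := (hrMatrix P).rank = m

/-- A polynomial matrix is column reduced if its highest-column-degree coefficient matrix has
full column rank. -/
def ColReduced {m n : ℕ} (P : Matrix (Fin m) (Fin n) F[X]) : Prop := (hcMatrix P).rank = n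

/-- Evaluation of a polynomial matrix at a point of the algebraic closure. -/
def evalMat {m n : ℕ} (P : Matrix (Fin m) (Fin n) F[X]) (x : AlgebraicClosure F) :
    Matrix (Fin m) (Fin n) (AlgebraicClosure F) :=
  Matrix.of fun i j => aeval x (P i j)

/-- The rows of `P` form a minimal basis of the rational subspace they span (Forney's
characterization): full row rank at every point of the algebraic closure, and row reduced. -/
def IsMinimalRowBasis {m n : ℕ} (P : Matrix (Fin m) (Fin n) F[X]) : Prop :=
  (∀ x : AlgebraicClosure F, (evalMat P x).rank = m) ∧ RowReduced P

/-- The columns of `P` form a minimal basis of the rational subspace they span. -/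
def IsMinimalColBasis {m n : ℕ} (P : Matrix (Fin m) (Fin n) F[X]) : Prop :=
  (∀ x : AlgebraicClosure F, (evalMat P x).rank = n) ∧ ColReduced P

/-- The column space Col(P) over the field of rational functions. -/
def colSpace {m n : ℕ} (P : Matrix (Fin m) (Fin n) F[X]) :
    Submodule (RatFunc F) (Fin m → RatFunc F) :=
  LinearMap.range (toRat P).mulVecLin

/-- The row space Row(P) over the field of rational functions. -/
def rowSpace {m n : ℕ} (P : Matrix (Fin m) (Fin n) F[X]) :
    Submodule (RatFunc F) (Fin n → RatFunc F) :=
  LinearMap.range (toRat P)ᵀ.mulVecLin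

/-- The right nullspace N_r(P). -/
def rightNull {m n : ℕ} (P : Matrix (Fin m) (Fin n) F[X]) :
    Submodule (RatFunc F) (Fin n → RatFunc F) :=
  LinearMap.ker (toRat P).mulVecLin

/-- The left nullspace N_ℓ(P). -/
def leftNull {m n : ℕ} (P : Matrix (Fin m) (Fin n) F[X]) :
    Submodule (RatFunc F) (Fin m → RatFunc F) :=
  LinearMap.ker (toRat P)ᵀ.mulVecLin

theorem Polynomial.coeff_mul_of_natDegree_le_of_add_le {S : Type*} [Semiring S] {p q : S[X]}
    {a b N : ℕ} (hp : p.natDegree ≤ a) (hq : q.natDegree ≤ b) (hN : a + b ≤ N) :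
    (p * q).coeff N = if a + b = N then p.coeff a * q.coeff b else 0 := by
  split_ifs with h
  · subst h
    exact coeff_mul_add_eq_of_natDegree_le hp hq
  · exact coeff_eq_zero_of_natDegree_lt (natDegree_mul_le.trans_lt (by omega))

theorem Polynomial.exists_ne_zero_natDegree_eq_sup {S ι : Type*} [Semiring S] [Fintype ι]
    {v : ι → S[X]} (hv : v ≠ 0) :
    ∃ j, v j ≠ 0 ∧ (v j).natDegree = Finset.univ.sup fun j => (v j).natDegree := by
  classical
  obtain ⟨j₀, hj₀⟩ := Function.ne_iff.mp hv
  obtain ⟨j, hj, hmax⟩ := Finset.exists_max_image {j | v j ≠ 0} (fun j => (v j).natDegree)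
    ⟨j₀, by simpa using hj₀⟩
  refine ⟨j, by simpa using hj,
    le_antisymm (Finset.le_sup (f := fun j => (v j).natDegree) (Finset.mem_univ j)) ?_⟩
  refine Finset.sup_le fun j' _ => ?_
  by_cases hj' : v j' = 0
  · simp [hj']
  · exact hmax j' (by simpa using hj')

namespace Matrix

variable {K : Type*} [Field K] {l m n : Type*}

theorem eq_zero_of_rank_eq_zero [Fintype n] [DecidableEq n] {B : Matrix m n K}
    (h : B.rank = 0) : B = 0 := by
  rw [rank, Submodule.finrank_eq_zero, LinearMap.range_eq_bot] at h
  exact toLin'.injective (by rw [toLin'_apply', h, map_zero])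

theorem eq_zero_of_mul_eq_zero_of_rank_eq [Finite l] [Fintype m] [Fintype n]
    {A : Matrix l m K} {B : Matrix m n K} (hA : A.rank = Fintype.card m) (hAB : A * B = 0) :
    B = 0 := by
  classical
  have := rank_add_rank_le_card_of_mul_eq_zero hAB
  exact eq_zero_of_rank_eq_zero (by omega)

theorem row_ne_zero_of_rank_eq [Fintype m] [Fintype n] {A : Matrix m n K}
    (hA : A.rank = Fintype.card m) (i : m) : A.row i ≠ 0 :=
  (linearIndependent_iff_card_eq_finrank_span.mpr
    (hA.symm.trans A.rank_eq_finrank_span_row)).ne_zero i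

end Matrix

section PolynomialMatrix

variable {m k n : ℕ}

def coeffMatrix (P : Matrix (Fin m) (Fin n) F[X]) (N : ℕ) : Matrix (Fin m) (Fin n) F :=
  Matrix.of fun i j => (P i j).coeff N

theorem coeffMatrix_eq_zero_of_lt {P : Matrix (Fin m) (Fin n) F[X]} {d N : ℕ}
    (hdeg : ∀ i j, (P i j).degree ≤ d) (hN : d < N) : coeffMatrix P N = 0 := by
  ext i j
  exact coeff_eq_zero_of_degree_lt ((hdeg i j).trans_lt (by exact_mod_cast hN))

theorem natDegree_le_rowDegNat (P : Matrix (Fin m) (Fin n) F[X]) (i : Fin m) (j : Fin n) :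
    (P i j).natDegree ≤ rowDegNat P i :=
  Finset.le_sup (f := fun j => (P i j).natDegree) (Finset.mem_univ j)

theorem natDegree_le_colDegNat (P : Matrix (Fin m) (Fin n) F[X]) (i : Fin m) (j : Fin n) :
    (P i j).natDegree ≤ colDegNat P j :=
  natDegree_le_rowDegNat Pᵀ j i

theorem rowDeg_eq_rowDegNat {P : Matrix (Fin m) (Fin n) F[X]} {i : Fin m} (h : P.row i ≠ 0) :
    rowDeg P i = rowDegNat P i := by
  obtain ⟨j, hj, hdeg⟩ := exists_ne_zero_natDegree_eq_sup (v := fun j => P i j) h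
  refine le_antisymm (Finset.sup_le fun j' _ => degree_le_natDegree.trans ?_) ?_
  · exact_mod_cast natDegree_le_rowDegNat P i j'
  · rw [rowDegNat, ← hdeg, ← degree_eq_natDegree hj]
    exact Finset.le_sup (f := fun j => (P i j).degree) (Finset.mem_univ j)

theorem colDeg_eq_colDegNat {P : Matrix (Fin m) (Fin n) F[X]} {j : Fin n} (h : P.col j ≠ 0) :
    colDeg P j = colDegNat P j :=
  rowDeg_eq_rowDegNat (P := Pᵀ) h

theorem hrMatrix_row_ne_zero {P : Matrix (Fin m) (Fin n) F[X]} {i : Fin m} (h : P.row i ≠ 0) :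
    (hrMatrix P).row i ≠ 0 := by
  obtain ⟨j, hj, hdeg⟩ := exists_ne_zero_natDegree_eq_sup (v := fun j => P i j) h
  refine Function.ne_iff.mpr ⟨j, ?_⟩
  simpa [hrMatrix, rowDegNat, ← hdeg, Matrix.row] using hj

theorem ColReduced.col_ne_zero {P : Matrix (Fin m) (Fin n) F[X]} (hP : ColReduced P) (j : Fin n) :
    P.col j ≠ 0 := by
  intro h
  apply Matrix.row_ne_zero_of_rank_eq (A := (hcMatrix P)ᵀ)
    (by rw [Matrix.rank_transpose, Fintype.card_fin]; exact hP) j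
  ext i
  simp [hcMatrix, Matrix.row, show P i j = 0 from congrFun h i]

theorem row_ne_zero_of_rank_evalMat {P : Matrix (Fin m) (Fin n) F[X]} {x : AlgebraicClosure F}
    (h : (evalMat P x).rank = m) (i : Fin m) : P.row i ≠ 0 := by
  intro h0
  apply Matrix.row_ne_zero_of_rank_eq (by simpa using h) i
  ext j
  simp [evalMat, Matrix.row, show P i j = 0 from congrFun h0 j]

theorem coeffMatrix_mul_of_le (L : Matrix (Fin m) (Fin k) F[X]) (R : Matrix (Fin k) (Fin n) F[X])
    {N : ℕ} (hN : ∀ i, colDegNat L i + rowDegNat R i ≤ N) :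
    coeffMatrix (L * R) N = hcMatrix L *
      Matrix.diagonal (fun i => if colDegNat L i + rowDegNat R i = N then (1 : F) else 0) *
        hrMatrix R := by
  ext a b
  rw [coeffMatrix, Matrix.of_apply, Matrix.mul_apply, finsetSum_coeff, Matrix.mul_apply]
  simp only [Matrix.mul_diagonal, hcMatrix, hrMatrix, Matrix.of_apply]
  refine Finset.sum_congr rfl fun i _ => ?_
  rw [coeff_mul_of_natDegree_le_of_add_le (natDegree_le_colDegNat L a i)
    (natDegree_le_rowDegNat R i b) (hN i)]
  split_ifs <;> simp

end PolynomialMatrix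

section Factorization

variable {m k n d : ℕ} {L : Matrix (Fin m) (Fin k) F[X]} {R : Matrix (Fin k) (Fin n) F[X]}

theorem colDegNat_add_rowDegNat_le (hL : ColReduced L) (hR : ∀ i, R.row i ≠ 0)
    (hdeg : ∀ a b, ((L * R) a b).degree ≤ d) (i : Fin k) : colDegNat L i + rowDegNat R i ≤ d := by
  by_contra! hi
  obtain ⟨i₁, -, hmax⟩ := Finset.univ.exists_max_image
    (fun i => colDegNat L i + rowDegNat R i) ⟨i, Finset.mem_univ i⟩
  have hN : ∀ i, colDegNat L i + rowDegNat R i ≤ colDegNat L i₁ + rowDegNat R i₁ :=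
    fun i => hmax i (Finset.mem_univ i)
  have hzero := coeffMatrix_eq_zero_of_lt hdeg (hi.trans_le (hN i))
  rw [coeffMatrix_mul_of_le L R hN, Matrix.mul_assoc] at hzero
  have hDR := Matrix.eq_zero_of_mul_eq_zero_of_rank_eq (by rw [Fintype.card_fin]; exact hL) hzero
  refine hrMatrix_row_ne_zero (hR i₁) (funext fun j => ?_)
  simpa [Matrix.diagonal_mul] using congrFun (congrFun hDR i₁) j

theorem colDegNat_add_rowDegNat_eq (hL : ColReduced L) (hR : ∀ i, R.row i ≠ 0)
    (hdeg : ∀ a b, ((L * R) a b).degree ≤ d) (hinf : (coeffMatrix (L * R) d).rank = k)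
    (i : Fin k) : colDegNat L i + rowDegNat R i = d := by
  classical
  set w : Fin k → F := fun i => if colDegNat L i + rowDegNat R i = d then 1 else 0
  have hw : k ≤ Fintype.card {i // w i ≠ 0} := calc
    k = (coeffMatrix (L * R) d).rank := hinf.symm
    _ = (hcMatrix L * Matrix.diagonal w * hrMatrix R).rank := by
      rw [coeffMatrix_mul_of_le L R (colDegNat_add_rowDegNat_le hL hR hdeg)]
    _ ≤ (Matrix.diagonal w).rank :=
      (Matrix.rank_mul_le_left _ _).trans (Matrix.rank_mul_le_right _ _)
    _ = Fintype.card {i // w i ≠ 0} := Matrix.rank_diagonal w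
  by_contra h
  have := Fintype.card_subtype_lt (p := fun i => w i ≠ 0) (x := i) (by simp [w, h])
  rw [Fintype.card_fin] at this
  omega

theorem RowReduced.of_mul (hL : ColReduced L) (hR : ∀ i, R.row i ≠ 0)
    (hdeg : ∀ a b, ((L * R) a b).degree ≤ d) (hinf : (coeffMatrix (L * R) d).rank = k) :
    RowReduced R := by
  have hsum := colDegNat_add_rowDegNat_eq hL hR hdeg hinf
  have hcoeff : coeffMatrix (L * R) d = hcMatrix L * hrMatrix R := by
    rw [coeffMatrix_mul_of_le L R (fun i => (hsum i).le)]
    simp [hsum]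
  refine le_antisymm (Matrix.rank_le_height _) ?_
  calc k = (coeffMatrix (L * R) d).rank := hinf.symm
    _ ≤ (hrMatrix R).rank := hcoeff ▸ Matrix.rank_mul_le_right _ _

theorem finrank_rowSpace (P : Matrix (Fin m) (Fin n) F[X]) :
    Module.finrank (RatFunc F) (rowSpace P) = normalRank P :=
  Matrix.rank_transpose _

theorem rowSpace_mul_le (L : Matrix (Fin m) (Fin k) F[X]) (R : Matrix (Fin k) (Fin n) F[X]) :
    rowSpace (L * R) ≤ rowSpace R := by
  rw [rowSpace, rowSpace, toRat, Matrix.map_mul, Matrix.transpose_mul, Matrix.mulVecLin_mul]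
  exact LinearMap.range_comp_le_range _ _

theorem rowSpace_eq_of_normalRank_mul (h : normalRank (L * R) = k) :
    rowSpace R = rowSpace (L * R) := by
  refine (Submodule.eq_of_le_of_finrank_le (rowSpace_mul_le L R) ?_).symm
  rw [finrank_rowSpace, finrank_rowSpace, h]
  exact Matrix.rank_le_height _

theorem rank_evalMat_of_mul (h : ∀ x, (evalMat (L * R) x).rank = k) (x : AlgebraicClosure F) :
    (evalMat R x).rank = k := by
  refine le_antisymm (Matrix.rank_le_height _) ?_
  have hmul : evalMat (L * R) x = evalMat L x * evalMat R x := by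
    ext i j
    simp [evalMat, Matrix.mul_apply]
  calc k = (evalMat (L * R) x).rank := (h x).symm
    _ ≤ (evalMat R x).rank := hmul ▸ Matrix.rank_mul_le_right _ _

end Factorization

section Transpose

variable {m n : ℕ}

theorem isMinimalColBasis_transpose (P : Matrix (Fin m) (Fin n) F[X]) :
    IsMinimalColBasis Pᵀ ↔ IsMinimalRowBasis P := by
  change (∀ x, (evalMat P x)ᵀ.rank = m) ∧ (hrMatrix P)ᵀ.rank = m ↔ _
  simp only [Matrix.rank_transpose]
  rfl

theorem isMinimalRowBasis_transpose (P : Matrix (Fin m) (Fin n) F[X]) :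
    IsMinimalRowBasis Pᵀ ↔ IsMinimalColBasis P :=
  (isMinimalColBasis_transpose Pᵀ).symm

theorem colSpace_eq_rowSpace_transpose (P : Matrix (Fin m) (Fin n) F[X]) :
    colSpace P = rowSpace Pᵀ :=
  rfl

end Transpose

structure HasNoEigenvalues {m n : ℕ} (P : Matrix (Fin m) (Fin n) F[X]) (r d : ℕ) : Prop where
  degree_le : ∀ i j, (P i j).degree ≤ d
  normalRank_eq : normalRank P = r
  rank_evalMat : ∀ x : AlgebraicClosure F, (evalMat P x).rank = r
  rank_coeffMatrix : (coeffMatrix P d).rank = r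

namespace HasNoEigenvalues

variable {m k n d : ℕ}

theorem transpose {P : Matrix (Fin m) (Fin n) F[X]} (h : HasNoEigenvalues P k d) :
    HasNoEigenvalues Pᵀ k d where
  degree_le i j := h.degree_le j i
  normalRank_eq := (Matrix.rank_transpose _).trans h.normalRank_eq
  rank_evalMat x := (Matrix.rank_transpose _).trans (h.rank_evalMat x)
  rank_coeffMatrix := (Matrix.rank_transpose _).trans h.rank_coeffMatrix

theorem isMinimalRowBasis_of_mul {L : Matrix (Fin m) (Fin k) F[X]}
    {R : Matrix (Fin k) (Fin n) F[X]} (h : HasNoEigenvalues (L * R) k d)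
    (hL : IsMinimalColBasis L) :
    IsMinimalRowBasis R ∧ rowSpace R = rowSpace (L * R) ∧
      ∀ i, colDeg L i + rowDeg R i = d := by
  have hRx := rank_evalMat_of_mul h.rank_evalMat
  have hR : ∀ i, R.row i ≠ 0 := row_ne_zero_of_rank_evalMat (hRx 0)
  refine ⟨⟨hRx, .of_mul hL.2 hR h.degree_le h.rank_coeffMatrix⟩,
    rowSpace_eq_of_normalRank_mul h.normalRank_eq, fun i => ?_⟩
  rw [colDeg_eq_colDegNat (hL.2.col_ne_zero i), rowDeg_eq_rowDegNat (hR i), ← Nat.cast_add,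
    colDegNat_add_rowDegNat_eq hL.2 hR h.degree_le h.rank_coeffMatrix i]

theorem isMinimalColBasis_of_mul {L : Matrix (Fin m) (Fin k) F[X]}
    {R : Matrix (Fin k) (Fin n) F[X]} (h : HasNoEigenvalues (L * R) k d)
    (hR : IsMinimalRowBasis R) :
    IsMinimalColBasis L ∧ colSpace L = colSpace (L * R) ∧
      ∀ i, colDeg L i + rowDeg R i = d := by
  have hT : HasNoEigenvalues (Rᵀ * Lᵀ) k d := Matrix.transpose_mul L R ▸ h.transpose
  obtain ⟨hL, hspace, hdeg⟩ := hT.isMinimalRowBasis_of_mul ((isMinimalColBasis_transpose R).mpr hR)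
  refine ⟨(isMinimalRowBasis_transpose L).mp hL, ?_, fun i => (add_comm _ _).trans (hdeg i)⟩
  rw [colSpace_eq_rowSpace_transpose, colSpace_eq_rowSpace_transpose, Matrix.transpose_mul]
  exact hspace

end HasNoEigenvalues

theorem minimal_rank_factorizations_no_eigenvalues_general
    {F : Type*} [Field F] {m n r d : ℕ}
    (P : Matrix (Fin m) (Fin n) F[X])
    (hdeg : ∀ i j, (P i j).degree ≤ (d : WithBot ℕ))
    (hrank : normalRank P = r)
    (hfin : ∀ x : AlgebraicClosure F, (evalMat P x).rank = r)
    (hinf : (Matrix.of (fun (i : Fin m) (j : Fin n) => (P i j).coeff d) :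
        Matrix (Fin m) (Fin n) F).rank = r) :
    (∀ (L : Matrix (Fin m) (Fin r) F[X]) (E : Matrix (Fin r) (Fin r) F[X])
        (R : Matrix (Fin r) (Fin n) F[X]),
      P = L * E * R →
      IsMinimalColBasis L → colSpace L = colSpace P →
      IsMinimalRowBasis R → rowSpace R = rowSpace P →
        IsMinimalRowBasis (E * R) ∧ rowSpace (E * R) = rowSpace P ∧
        IsMinimalColBasis (L * E) ∧ colSpace (L * E) = colSpace P ∧
        (∀ i : Fin r, colDeg L i + rowDeg (E * R) i = (d : WithBot ℕ)) ∧
        (∀ i : Fin r, colDeg (L * E) i + rowDeg R i = (d : WithBot ℕ))) ∧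
    (∀ (L : Matrix (Fin m) (Fin r) F[X]) (R : Matrix (Fin r) (Fin n) F[X]),
      P = L * R →
      IsMinimalColBasis L → colSpace L = colSpace P →
        IsMinimalRowBasis R ∧ rowSpace R = rowSpace P ∧
        ∀ i : Fin r, colDeg L i + rowDeg R i = (d : WithBot ℕ)) ∧
    (∀ (L : Matrix (Fin m) (Fin r) F[X]) (R : Matrix (Fin r) (Fin n) F[X]),
      P = L * R →
      IsMinimalRowBasis R → rowSpace R = rowSpace P →
        IsMinimalColBasis L ∧ colSpace L = colSpace P ∧
        ∀ i : Fin r, colDeg L i + rowDeg R i = (d : WithBot ℕ)) := by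
  have hP : HasNoEigenvalues P r d := ⟨hdeg, hrank, hfin, hinf⟩
  refine ⟨fun L E R hLER hL _ hR _ => ?_, fun L R hLR hL _ => ?_, fun L R hLR hR _ => ?_⟩
  · subst hLER
    obtain ⟨hER, hERspace, hERdeg⟩ :=
      (Matrix.mul_assoc L E R ▸ hP).isMinimalRowBasis_of_mul hL
    obtain ⟨hLE, hLEspace, hLEdeg⟩ := hP.isMinimalColBasis_of_mul hR
    exact ⟨hER, hERspace.trans (by rw [Matrix.mul_assoc]), hLE, hLEspace, hERdeg, hLEdeg⟩
  · subst hLR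
    exact hP.isMinimalRowBasis_of_mul hL
  · subst hLR
    exact hP.isMinimalColBasis_of_mul hR

/-- For a polynomial matrix of normal rank r > 0, degree exactly d, without finite or
infinite eigenvalues (with respect to grade d), every minimal rank factorization of the
three kinds has the stated extra minimality and degree-matching properties. -/
theorem minimal_rank_factorizations_no_eigenvalues
    {F : Type*} [Field F] {m n r d : ℕ}
    (P : Matrix (Fin m) (Fin n) F[X])
    (hdeg : ∀ i j, (P i j).degree ≤ (d : WithBot ℕ))
    (hrank : normalRank P = r) (hr0 : 0 < r)
    (hdegex : matDeg P = (d : WithBot ℕ))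
    (hfin : ∀ x : AlgebraicClosure F, (evalMat P x).rank = r)
    (hinf : (Matrix.of (fun (i : Fin m) (j : Fin n) => (P i j).coeff d) :
        Matrix (Fin m) (Fin n) F).rank = r) :
    (∀ (L : Matrix (Fin m) (Fin r) F[X]) (E : Matrix (Fin r) (Fin r) F[X])
        (R : Matrix (Fin r) (Fin n) F[X]),
      P = L * E * R →
      IsMinimalColBasis L → colSpace L = colSpace P →
      IsMinimalRowBasis R → rowSpace R = rowSpace P →
        IsMinimalRowBasis (E * R) ∧ rowSpace (E * R) = rowSpace P ∧
        IsMinimalColBasis (L * E) ∧ colSpace (L * E) = colSpace P ∧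
        (∀ i : Fin r, colDeg L i + rowDeg (E * R) i = (d : WithBot ℕ)) ∧
        (∀ i : Fin r, colDeg (L * E) i + rowDeg R i = (d : WithBot ℕ))) ∧
    (∀ (L : Matrix (Fin m) (Fin r) F[X]) (R : Matrix (Fin r) (Fin n) F[X]),
      P = L * R →
      IsMinimalColBasis L → colSpace L = colSpace P →
        IsMinimalRowBasis R ∧ rowSpace R = rowSpace P ∧
        ∀ i : Fin r, colDeg L i + rowDeg R i = (d : WithBot ℕ)) ∧
    (∀ (L : Matrix (Fin m) (Fin r) F[X]) (R : Matrix (Fin r) (Fin n) F[X]),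
      P = L * R →
      IsMinimalRowBasis R → rowSpace R = rowSpace P →
        IsMinimalColBasis L ∧ colSpace L = colSpace P ∧
        ∀ i : Fin r, colDeg L i + rowDeg R i = (d : WithBot ℕ)) :=
  minimal_rank_factorizations_no_eigenvalues_general P hdeg hrank hfin hinf
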